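/- In the DGA A, the element a₀c is a cycle that is not a boundary; hence the homology class of a₀c is nonzero in H(A). -/

import Mathlib

open MvPolynomial

/-!
Set a₁, a₂, a₁₂ to zero. Every monomial in the differential of a generator contains one of
them, so by the Leibniz rule this algebra map kills every boundary; it fixes the nonzero
cycle a₀c, which therefore is not a boundary.
-/

/-- The polynomial algebra over F₂ on generators
a₀, a₁, a₂, a₃, a₀₁, a₁₂, a₂₃, c, a₀₂, a₁₃ (indices 0,…,9). -/
abbrev P : Type := MvPolynomial (Fin 10) (ZMod 2)

/-- Values of the differential of A on the generators:
d(a₀)=d(a₁)=d(a₂)=d(a₃)=d(c)=0, d(a₀₁)=a₀a₁, d(a₁₂)=a₁a₂, d(a₂₃)=a₂a₃,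
d(a₀₂)=a₀a₁₂+a₀₁a₂, d(a₁₃)=a₁a₂₃+a₁₂a₃. -/
noncomputable def dvalA : Fin 10 → P :=
  ![0, 0, 0, 0, X 0 * X 1, X 1 * X 2, X 2 * X 3, 0,
    X 0 * X 5 + X 4 * X 2, X 1 * X 6 + X 5 * X 3]

/-- The differential of A: the unique F₂-linear derivation with the values
`dvalA` on the generators (Leibniz rule holds automatically). -/
noncomputable def dA : P → P := fun p => mkDerivation (ZMod 2) dvalA p

theorem MvPolynomial.map_derivation_eq_zero {σ R B : Type*} [CommSemiring R] [CommSemiring B]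
    [Algebra R B] (D : Derivation R (MvPolynomial σ R) (MvPolynomial σ R))
    (φ : MvPolynomial σ R →ₐ[R] B) (hD : ∀ i, φ (D (X i)) = 0) (p : MvPolynomial σ R) :
    φ (D p) = 0 := by
  induction p using MvPolynomial.induction_on with
  | C a => rw [derivation_C, map_zero]
  | add p q hp hq => rw [map_add, map_add, hp, hq, add_zero]
  | mul_X p i hp =>
    rw [Derivation.leibniz, smul_eq_mul, smul_eq_mul, map_add, map_mul, map_mul, hp, hD,
      mul_zero, mul_zero, add_zero]

noncomputable def killA : P →ₐ[ZMod 2] P :=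
  aeval fun i => if i ∈ ({1, 2, 5} : Finset (Fin 10)) then 0 else X i

theorem killA_dA (p : P) : killA (dA p) = 0 := by
  refine map_derivation_eq_zero _ killA (fun i => ?_) p
  fin_cases i <;> simp [killA, dvalA]

/-- In A, the element a₀c is a cycle that is not a boundary, so its homology
class is nonzero in H(A). -/
theorem stmt_18 :
    dA (X 0 * X 7) = 0 ∧
    (X 0 * X 7 : P) ≠ 0 ∧
    ¬ ∃ u : P, dA u = X 0 * X 7 := by
  have hne : (X 0 * X 7 : P) ≠ 0 := mul_ne_zero (X_ne_zero 0) (X_ne_zero 7)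
  refine ⟨?_, hne, ?_⟩
  · simp [dA, dvalA]
  · rintro ⟨u, hu⟩
    have hfix : killA (X 0 * X 7) = X 0 * X 7 := by simp [killA]
    apply hne
    rw [← hfix, ← hu, killA_dA]
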